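/- arXiv:0812.0314 — 4 statements merged into one kernel-verified Lean document; each statement's English description precedes it below -/
import Mathlib

section
/- For a locally injective holomorphic function f on a domain D in ℂ, the Schwarzian derivative S_f := (f''/f')' - (1/2)(f''/f')² vanishes identically on an open connected set if and only if f is the restriction of a Möbius transformation. -/
/-!
With `v = 1 / f'`, a direct computation gives `S_f = f' ^ 2 * (v' ^ 2 - 2 * v * v'') / 2`, so
`S_f = 0` means `v' ^ 2 = 2 * v * v''`. Differentiating gives `v * v''' = 0`, so on the connected
domain `v` is a quadratic polynomial, and the same relation says that its discriminant vanishes: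
`v = (c z + d) ^ 2`. Then `f' = (c z + d) ^ (-2)` integrates to a Möbius map of determinant `1`.
Conversely, for a Möbius map `v` is a multiple of `(c z + d) ^ 2`, a quadratic with vanishing
discriminant; the denominator cannot vanish on `D` because `f` is continuous there.
-/

noncomputable def schwarzian (f : ℂ → ℂ) : ℂ → ℂ := fun z =>
  deriv (fun w => deriv (deriv f) w / deriv f w) z
    - (1/2) * (deriv (deriv f) z / deriv f z) ^ 2

open Set Filter Topology

theorem schwarzian_eq_deriv_sq_mul_inv_deriv {f : ℂ → ℂ} {z : ℂ} (hf : AnalyticAt ℂ f z)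
    (hf' : deriv f z ≠ 0) :
    schwarzian f z = deriv f z ^ 2 *
      (deriv (deriv f)⁻¹ z ^ 2 - 2 * (deriv f)⁻¹ z * deriv (deriv (deriv f)⁻¹) z) / 2 := by
  have hv : deriv (deriv f)⁻¹ =ᶠ[𝓝 z] fun w => -deriv (deriv f) w / deriv f w ^ 2 := by
    filter_upwards [hf.eventually_analyticAt, hf.deriv.continuousAt.eventually_ne hf']
      with w hw hw'
    exact (hw.deriv.differentiableAt.hasDerivAt.inv hw').deriv
  have hv' : HasDerivAt (fun w => -deriv (deriv f) w / deriv f w ^ 2) _ z :=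
    hf.deriv.deriv.differentiableAt.hasDerivAt.neg.div
      (hf.deriv.differentiableAt.hasDerivAt.pow 2) (pow_ne_zero 2 hf')
  have hg : HasDerivAt (fun w => deriv (deriv f) w / deriv f w) _ z :=
    hf.deriv.deriv.differentiableAt.hasDerivAt.div hf.deriv.differentiableAt.hasDerivAt hf'
  rw [schwarzian, hg.deriv, hv.deriv_eq, hv'.deriv, hv.eq_of_nhds, Pi.inv_apply,
    Pi.neg_apply]
  field_simp
  ring

theorem schwarzian_eq_zero_iff_inv_deriv {f : ℂ → ℂ} {z : ℂ} (hf : AnalyticAt ℂ f z)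
    (hf' : deriv f z ≠ 0) :
    schwarzian f z = 0 ↔
      deriv (deriv f)⁻¹ z ^ 2 = 2 * (deriv f)⁻¹ z * deriv (deriv (deriv f)⁻¹) z := by
  rw [schwarzian_eq_deriv_sq_mul_inv_deriv hf hf']
  simp [hf', sub_eq_zero]

theorem hasDerivAt_quadratic (α β γ z : ℂ) :
    HasDerivAt (fun w => α * w ^ 2 + β * w + γ) (2 * α * z + β) z := by
  have h := (((hasDerivAt_pow 2 z).const_mul α).add ((hasDerivAt_id' z).const_mul β)).add_const γ
  exact h.congr_deriv (by ring)

theorem exists_sq_eq_of_discrim_eq_zero {α β γ : ℂ} (h : discrim α β γ = 0) :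
    ∃ c d : ℂ, ∀ z, α * z ^ 2 + β * z + γ = (c * z + d) ^ 2 := by
  obtain ⟨c, rfl⟩ := IsAlgClosed.exists_eq_mul_self α
  obtain ⟨d, rfl⟩ := IsAlgClosed.exists_eq_mul_self γ
  rw [discrim] at h
  have : (β - 2 * c * d) * (β + 2 * c * d) = 0 := by linear_combination h
  rcases mul_eq_zero.1 this with h | h
  · exact ⟨c, d, fun z => by linear_combination z * h⟩
  · exact ⟨c, -d, fun z => by linear_combination z * h⟩

theorem deriv_sq_sub_two_mul_mul_deriv_deriv_eq_discrim {D : Set ℂ} (hD : IsOpen D)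
    {v : ℂ → ℂ} {α β γ : ℂ} (hv : EqOn v (fun z => α * z ^ 2 + β * z + γ) D) {z : ℂ}
    (hz : z ∈ D) :
    deriv v z ^ 2 - 2 * v z * deriv (deriv v) z = discrim α β γ := by
  have hv' : EqOn (deriv v) (fun z => 2 * α * z + β) D := fun z hz => by
    rw [hv.deriv hD hz, (hasDerivAt_quadratic α β γ z).deriv]
  have hv'' : deriv (deriv v) z = 2 * α := by
    rw [hv'.deriv hD hz]
    simp
  rw [hv hz, hv' hz, hv'', discrim]
  ring

theorem exists_eqOn_quadratic_of_deriv_deriv_deriv_eq_zero {D : Set ℂ} (hD : IsOpen D)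
    (hDc : IsPreconnected D) {v : ℂ → ℂ} (hv : AnalyticOnNhd ℂ v D)
    (h3 : EqOn (deriv (deriv (deriv v))) 0 D) :
    ∃ α β γ : ℂ, EqOn v (fun z => α * z ^ 2 + β * z + γ) D := by
  obtain ⟨α, hα⟩ :=
    hD.exists_is_const_of_deriv_eq_zero hDc hv.deriv.deriv.differentiableOn h3
  obtain ⟨β, hβ⟩ := hD.exists_eq_add_of_deriv_eq hDc hv.deriv.differentiableOn
    (g := fun z => α * z) (by fun_prop) (fun z hz => by simp [hα z hz])
  obtain ⟨γ, hγ⟩ := hD.exists_eq_add_of_deriv_eq hDc hv.differentiableOn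
    (g := fun z => α / 2 * z ^ 2 + β * z + 0) (by fun_prop) (fun z hz => by
      rw [hβ hz, (hasDerivAt_quadratic _ _ _ z).deriv]
      ring)
  exact ⟨α / 2, β, γ, fun z hz => by simp only [hγ hz, add_zero]⟩

theorem deriv_deriv_deriv_eq_zero_of_sq_deriv_eq {D : Set ℂ} (hD : IsOpen D) {v : ℂ → ℂ}
    (hv : AnalyticOnNhd ℂ v D) (hv0 : ∀ z ∈ D, v z ≠ 0)
    (hrel : ∀ z ∈ D, deriv v z ^ 2 = 2 * v z * deriv (deriv v) z) :
    EqOn (deriv (deriv (deriv v))) 0 D := by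
  intro z hz
  have hrel' : EqOn (fun w => deriv v w ^ 2 - 2 * v w * deriv (deriv v) w) 0 D :=
    fun w hw => sub_eq_zero.2 (hrel w hw)
  have hd : HasDerivAt (fun w => deriv v w ^ 2 - 2 * v w * deriv (deriv v) w) _ z :=
    ((hv.deriv z hz).differentiableAt.hasDerivAt.pow 2).sub
      (((hv z hz).differentiableAt.hasDerivAt.const_mul 2).mul
        (hv.deriv.deriv z hz).differentiableAt.hasDerivAt)
  have hzero := hrel'.deriv hD hz
  rw [hd.deriv, Pi.zero_def, deriv_const] at hzero
  have : v z * deriv (deriv (deriv v)) z = 0 := by linear_combination -hzero / 2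
  exact (mul_eq_zero.1 this).resolve_left (hv0 z hz)

theorem exists_eqOn_sq_of_sq_deriv_eq {D : Set ℂ} (hD : IsOpen D) (hDconn : IsConnected D)
    {v : ℂ → ℂ} (hv : AnalyticOnNhd ℂ v D) (hv0 : ∀ z ∈ D, v z ≠ 0)
    (hrel : ∀ z ∈ D, deriv v z ^ 2 = 2 * v z * deriv (deriv v) z) :
    ∃ c d : ℂ, EqOn v (fun z => (c * z + d) ^ 2) D := by
  obtain ⟨α, β, γ, hq⟩ := exists_eqOn_quadratic_of_deriv_deriv_deriv_eq_zero hD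
    hDconn.isPreconnected hv (deriv_deriv_deriv_eq_zero_of_sq_deriv_eq hD hv hv0 hrel)
  obtain ⟨z₀, hz₀⟩ := hDconn.nonempty
  have hdisc : discrim α β γ = 0 := by
    rw [← deriv_sq_sub_two_mul_mul_deriv_deriv_eq_discrim hD hq hz₀, hrel z₀ hz₀, sub_self]
  obtain ⟨c, d, hcd⟩ := exists_sq_eq_of_discrim_eq_zero hdisc
  exact ⟨c, d, fun z hz => (hq hz).trans (hcd z)⟩

theorem exists_deriv_eq_inv_sq_of_schwarzian_eq_zero {D : Set ℂ} (hD : IsOpen D)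
    (hDconn : IsConnected D) {f : ℂ → ℂ} (hf : AnalyticOnNhd ℂ f D)
    (hf' : ∀ z ∈ D, deriv f z ≠ 0) (hS : ∀ z ∈ D, schwarzian f z = 0) :
    ∃ c d : ℂ, ∀ z ∈ D, deriv f z = ((c * z + d) ^ 2)⁻¹ := by
  obtain ⟨c, d, hcd⟩ := exists_eqOn_sq_of_sq_deriv_eq hD hDconn (hf.deriv.inv hf')
    (fun z hz => inv_ne_zero (hf' z hz))
    (fun z hz => (schwarzian_eq_zero_iff_inv_deriv (hf z hz) (hf' z hz)).1 (hS z hz))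
  refine ⟨c, d, fun z hz => ?_⟩
  rw [← inv_inv (deriv f z), ← Pi.inv_apply (deriv f) z, hcd hz]

theorem hasDerivAt_mobius (a b c d : ℂ) {z : ℂ} (hz : c * z + d ≠ 0) :
    HasDerivAt (fun w => (a * w + b) / (c * w + d)) ((a * d - b * c) / (c * z + d) ^ 2) z := by
  have h : HasDerivAt (fun w => (a * w + b) / (c * w + d)) _ z :=
    (((hasDerivAt_id' z).const_mul a).add_const b).div
      (((hasDerivAt_id' z).const_mul c).add_const d) hz
  exact h.congr_deriv (by ring)

theorem exists_eqOn_mobius_of_deriv_eq {D : Set ℂ} (hD : IsOpen D) (hDconn : IsConnected D)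
    {f : ℂ → ℂ} (hf : DifferentiableOn ℂ f D) {c d : ℂ} (hcd : ∀ z ∈ D, c * z + d ≠ 0)
    (hf' : ∀ z ∈ D, deriv f z = ((c * z + d) ^ 2)⁻¹) :
    ∃ a b : ℂ, a * d - b * c = 1 ∧ ∀ z ∈ D, f z = (a * z + b) / (c * z + d) := by
  obtain ⟨z₀, hz₀⟩ := hDconn.nonempty
  have hw₀ := hcd z₀ hz₀
  -- `a, b` are chosen so that the Möbius map agrees with `f` at `z₀` and has determinant `1`.
  set a := (c * z₀ + d)⁻¹ + c * f z₀
  set b := f z₀ * (c * z₀ + d) - a * z₀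
  have hdet : a * d - b * c = 1 := by
    simp only [a, b]
    field_simp
    ring
  refine ⟨a, b, hdet, hD.eqOn_of_deriv_eq hDconn.isPreconnected hf
    (fun z hz => (hasDerivAt_mobius a b c d (hcd z hz)).differentiableAt.differentiableWithinAt)
    (fun z hz => ?_) hz₀ ?_⟩
  · rw [hf' z hz, (hasDerivAt_mobius a b c d (hcd z hz)).deriv, hdet, one_div]
  · simp only [b]
    rw [eq_div_iff hw₀]
    ring

theorem mobius_denom_ne_zero {D : Set ℂ} (hD : IsOpen D) {f : ℂ → ℂ} (hf : ContinuousOn f D)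
    {a b c d : ℂ} (hdet : a * d - b * c ≠ 0) (hfD : ∀ z ∈ D, f z = (a * z + b) / (c * z + d))
    {w : ℂ} (hw : w ∈ D) : c * w + d ≠ 0 := by
  intro hw0
  have hc : c ≠ 0 := by
    rintro rfl
    exact hdet (by linear_combination a * hw0)
  -- `f z * (c z + d) = a z + b` off the pole `w`, hence at `w` by continuity.
  have hlim : Tendsto (fun z => f z * (c * z + d)) (𝓝[≠] w) (𝓝 (a * w + b)) := by
    have hlin : Continuous fun z : ℂ => a * z + b := by fun_prop
    refine (hlin.tendsto w).mono_left nhdsWithin_le_nhds |>.congr' ?_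
    filter_upwards [self_mem_nhdsWithin, nhdsWithin_le_nhds (hD.mem_nhds hw)] with z hzw hz
    have hz0 : c * z + d ≠ 0 := by
      rw [show c * z + d = c * (z - w) by linear_combination hw0]
      exact mul_ne_zero hc (sub_ne_zero.2 hzw)
    rw [hfD z hz, div_mul_cancel₀ _ hz0]
  have hcont : Tendsto (fun z => f z * (c * z + d)) (𝓝[≠] w) (𝓝 (f w * (c * w + d))) :=
    ((hf.continuousAt (hD.mem_nhds hw)).mul (by fun_prop)).tendsto.mono_left nhdsWithin_le_nhds
  have hab : a * w + b = 0 := by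
    rw [tendsto_nhds_unique hlim hcont, hw0, mul_zero]
  exact hdet (by linear_combination a * hw0 - c * hab)

theorem schwarzian_eq_zero_of_eqOn_mobius {D : Set ℂ} (hD : IsOpen D) {f : ℂ → ℂ}
    (hf : DifferentiableOn ℂ f D) {a b c d : ℂ} (hdet : a * d - b * c ≠ 0)
    (hfD : ∀ z ∈ D, f z = (a * z + b) / (c * z + d)) {z : ℂ} (hz : z ∈ D) :
    schwarzian f z = 0 := by
  have hcd : ∀ z ∈ D, c * z + d ≠ 0 := fun z hz =>
    mobius_denom_ne_zero hD hf.continuousOn hdet hfD hz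
  have hderiv : EqOn (deriv f) (fun z => (a * d - b * c) / (c * z + d) ^ 2) D := fun z hz => by
    rw [EqOn.deriv (g := fun z => (a * z + b) / (c * z + d)) hfD hD hz,
      (hasDerivAt_mobius a b c d (hcd z hz)).deriv]
  -- `1 / f'` is the quadratic `k (c z + d) ^ 2`, whose discriminant vanishes.
  set k := (a * d - b * c)⁻¹
  have hv : EqOn (deriv f)⁻¹ (fun z => k * c ^ 2 * z ^ 2 + 2 * k * c * d * z + k * d ^ 2) D :=
    fun z hz => by
      rw [Pi.inv_apply, hderiv hz, inv_div]
      ring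
  have hdisc := deriv_sq_sub_two_mul_mul_deriv_deriv_eq_discrim hD hv hz
  rw [discrim, sub_eq_iff_eq_add] at hdisc
  rw [schwarzian_eq_zero_iff_inv_deriv (hf.analyticOnNhd hD z hz), hdisc]
  · ring
  · rw [hderiv hz]
    exact div_ne_zero hdet (pow_ne_zero 2 (hcd z hz))

/-- The Schwarzian derivative of a locally injective holomorphic function on a
nonempty open connected set vanishes identically iff `f` is the restriction of a
Möbius transformation. -/
theorem schwarzian_eq_zero_iff_mobius (D : Set ℂ) (hD : IsOpen D)
    (hDconn : IsConnected D) (f : ℂ → ℂ)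
    (hf : DifferentiableOn ℂ f D) (hf' : ∀ z ∈ D, deriv f z ≠ 0) :
    (∀ z ∈ D, schwarzian f z = 0) ↔
      ∃ a b c d : ℂ, a * d - b * c ≠ 0 ∧
        ∀ z ∈ D, f z = (a * z + b) / (c * z + d) := by
  constructor
  · intro hS
    obtain ⟨c, d, hderiv⟩ :=
      exists_deriv_eq_inv_sq_of_schwarzian_eq_zero hD hDconn (hf.analyticOnNhd hD) hf' hS
    have hcd : ∀ z ∈ D, c * z + d ≠ 0 := fun z hz h0 => hf' z hz (by simp [hderiv z hz, h0])
    obtain ⟨a, b, hdet, hfD⟩ := exists_eqOn_mobius_of_deriv_eq hD hDconn hf hcd hderiv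
    exact ⟨a, b, c, d, hdet ▸ one_ne_zero, hfD⟩
  · rintro ⟨a, b, c, d, hdet, hfD⟩ z hz
    exact schwarzian_eq_zero_of_eqOn_mobius hD hf hdet hfD hz
end

section
/- A holomorphic locally injective function f on a simply connected domain satisfies σ_n^A[f] ≡ 0 if and only if the Schwarzian derivative of its local inverse is (locally) a polynomial of degree at most n - 4. -/
noncomputable def sigmaA (f : ℂ → ℂ) : ℕ → ℂ → ℂ
  | 0 => schwarzian f
  | (k+1) => fun z =>
      deriv (sigmaA f k) z
        - ((k : ℂ) + 2) * (deriv (deriv f) z / deriv f z) * sigmaA f k z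

open Polynomial Set Filter

namespace Polynomial

theorem exists_derivative_eq_of_degree_le {K : Type*} [Field K] [CharZero K] {P : K[X]} {m : ℕ}
    (hP : P.degree ≤ m) : ∃ Q : K[X], Q.degree ≤ ↑(m + 1) ∧ derivative Q = P := by
  refine ⟨∑ i ∈ Finset.range (m + 1), monomial (i + 1) (P.coeff i / (i + 1)), ?_, ?_⟩
  · refine (degree_sum_le _ _).trans (Finset.sup_le fun i hi => (degree_monomial_le _ _).trans ?_)
    exact_mod_cast Nat.succ_le_succ (Finset.mem_range_succ_iff.mp hi)
  · have hPm : P.natDegree < m + 1 := Nat.lt_succ_of_le (natDegree_le_iff_degree_le.mpr hP)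
    conv_rhs => rw [as_sum_range' P (m + 1) hPm]
    refine (derivative_sum).trans (Finset.sum_congr rfl fun i _ => ?_)
    rw [derivative_monomial, Nat.add_sub_cancel, Nat.cast_add_one,
      div_mul_cancel₀ _ (Nat.cast_add_one_ne_zero i)]

theorem iteratedDeriv_eval {𝕜 : Type*} [NontriviallyNormedField 𝕜] (P : 𝕜[X]) (k : ℕ) :
    iteratedDeriv k (fun x => P.eval x) = fun x => (derivative^[k] P).eval x := by
  induction k generalizing P with
  | zero => rfl
  | succ k ih =>
    rw [iteratedDeriv_succ', Function.iterate_succ_apply, ← ih]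
    exact congrArg (iteratedDeriv k) (_root_.funext fun _ => P.deriv)

end Polynomial

section PolynomialOnOpen

variable {𝕜 : Type*} [RCLike 𝕜] {U : Set 𝕜}

theorem IsOpen.exists_polynomial_of_iteratedDeriv_eq_zero (hU : IsOpen U)
    (hUc : IsPreconnected U) {m : ℕ} {q : 𝕜 → 𝕜} (hq : AnalyticOnNhd 𝕜 q U)
    (h : ∀ w ∈ U, iteratedDeriv (m + 1) q w = 0) :
    ∃ P : 𝕜[X], P.degree ≤ m ∧ ∀ w ∈ U, q w = P.eval w := by
  induction m generalizing q with
  | zero =>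
    obtain ⟨a, ha⟩ := hU.exists_is_const_of_deriv_eq_zero hUc hq.differentiableOn
      fun w hw => by simpa using h w hw
    exact ⟨C a, degree_C_le, fun w hw => by simpa using ha w hw⟩
  | succ m ih =>
    obtain ⟨P, hPdeg, hP⟩ := ih hq.deriv fun w hw => by rw [← iteratedDeriv_succ']; exact h w hw
    obtain ⟨Q, hQdeg, rfl⟩ := exists_derivative_eq_of_degree_le hPdeg
    obtain ⟨a, ha⟩ := hU.exists_eq_add_of_deriv_eq hUc hq.differentiableOn
      Q.differentiable.differentiableOn fun w hw => by simpa using hP w hw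
    refine ⟨Q + C a, (degree_add_le _ _).trans (max_le hQdeg (degree_C_le.trans ?_)), ?_⟩
    · exact_mod_cast Nat.zero_le _
    · simpa using fun w hw => ha hw

theorem IsOpen.iteratedDeriv_eq_zero_iff_exists_polynomial (hU : IsOpen U)
    (hUc : IsPreconnected U) (m : ℕ) {q : 𝕜 → 𝕜} (hq : AnalyticOnNhd 𝕜 q U) :
    (∀ w ∈ U, iteratedDeriv (m + 1) q w = 0) ↔
      ∃ P : 𝕜[X], P.degree ≤ m ∧ ∀ w ∈ U, q w = P.eval w := by
  refine ⟨hU.exists_polynomial_of_iteratedDeriv_eq_zero hUc hq, ?_⟩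
  rintro ⟨P, hPdeg, hP⟩ w hw
  have hqP : q =ᶠ[nhds w] fun x => P.eval x :=
    eventually_of_mem (hU.mem_nhds hw) hP
  rw [(hqP.iteratedDeriv (m + 1)).eq_of_nhds, iteratedDeriv_eval,
    iterate_derivative_eq_zero (Nat.lt_succ_of_le (natDegree_le_iff_degree_le.mpr hPdeg))]
  exact eval_zero

end PolynomialOnOpen

theorem deriv_comp_mul_deriv_eq_of_eqOn {𝕜 : Type*} [NontriviallyNormedField 𝕜] {D : Set 𝕜}
    (hD : IsOpen D) {f u v : 𝕜 → 𝕜} (huv : ∀ x ∈ D, u (f x) = v x) {z : 𝕜} (hz : z ∈ D)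
    (hu : DifferentiableAt 𝕜 u (f z)) (hf : DifferentiableAt 𝕜 f z) :
    deriv u (f z) * deriv f z = deriv v z := by
  rw [← deriv_comp z hu hf]
  exact (eventuallyEq_of_mem (hD.mem_nhds hz) huv).deriv_eq

noncomputable def preSchwarzian (f : ℂ → ℂ) : ℂ → ℂ := fun z => deriv (deriv f) z / deriv f z

theorem schwarzian_eq_deriv_preSchwarzian (f : ℂ → ℂ) (z : ℂ) :
    schwarzian f z = deriv (preSchwarzian f) z - 1 / 2 * preSchwarzian f z ^ 2 := rfl

theorem AnalyticOnNhd.preSchwarzian {U : Set ℂ} {f : ℂ → ℂ} (hf : AnalyticOnNhd ℂ f U)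
    (hf' : ∀ w ∈ U, deriv f w ≠ 0) : AnalyticOnNhd ℂ (preSchwarzian f) U :=
  hf.deriv.deriv.div hf.deriv hf'

theorem AnalyticOnNhd.schwarzian {U : Set ℂ} {f : ℂ → ℂ} (hf : AnalyticOnNhd ℂ f U)
    (hf' : ∀ w ∈ U, deriv f w ≠ 0) : AnalyticOnNhd ℂ (schwarzian f) U :=
  (hf.preSchwarzian hf').deriv.sub (analyticOnNhd_const.mul ((hf.preSchwarzian hf').pow 2))

section LeftInverse

variable {D : Set ℂ} {f g : ℂ → ℂ}

theorem deriv_comp_mul_deriv_of_leftInverse (hD : IsOpen D) (hf : AnalyticOnNhd ℂ f D)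
    (hg : AnalyticOnNhd ℂ g (f '' D)) (hleft : ∀ z ∈ D, g (f z) = z) {z : ℂ} (hz : z ∈ D) :
    deriv g (f z) * deriv f z = 1 := by
  simpa using deriv_comp_mul_deriv_eq_of_eqOn hD hleft hz
    (hg _ (mem_image_of_mem f hz)).differentiableAt (hf z hz).differentiableAt

theorem deriv_ne_zero_of_leftInverse (hD : IsOpen D) (hf : AnalyticOnNhd ℂ f D)
    (hg : AnalyticOnNhd ℂ g (f '' D)) (hleft : ∀ z ∈ D, g (f z) = z) {z : ℂ} (hz : z ∈ D) :
    deriv f z ≠ 0 :=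
  right_ne_zero_of_mul_eq_one (deriv_comp_mul_deriv_of_leftInverse hD hf hg hleft hz)

theorem deriv_ne_zero_on_image_of_leftInverse (hD : IsOpen D) (hf : AnalyticOnNhd ℂ f D)
    (hg : AnalyticOnNhd ℂ g (f '' D)) (hleft : ∀ z ∈ D, g (f z) = z) :
    ∀ w ∈ f '' D, deriv g w ≠ 0 := by
  rintro _ ⟨x, hx, rfl⟩
  exact left_ne_zero_of_mul_eq_one (deriv_comp_mul_deriv_of_leftInverse hD hf hg hleft hx)

theorem preSchwarzian_comp_of_leftInverse (hD : IsOpen D) (hf : AnalyticOnNhd ℂ f D)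
    (hg : AnalyticOnNhd ℂ g (f '' D)) (hleft : ∀ z ∈ D, g (f z) = z) {z : ℂ} (hz : z ∈ D) :
    preSchwarzian g (f z) = -preSchwarzian f z / deriv f z := by
  have hinv : ∀ x ∈ D, deriv g (f x) = (deriv f x)⁻¹ := fun x hx =>
    eq_inv_of_mul_eq_one_left (deriv_comp_mul_deriv_of_leftInverse hD hf hg hleft hx)
  have hf' := deriv_ne_zero_of_leftInverse hD hf hg hleft hz
  have h2 := deriv_comp_mul_deriv_eq_of_eqOn hD hinv hz
    (hg.deriv _ (mem_image_of_mem f hz)).differentiableAt (hf z hz).differentiableAt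
  rw [deriv_fun_inv'' (hf.deriv z hz).differentiableAt hf'] at h2
  simp only [preSchwarzian, hinv z hz]
  field_simp at h2 ⊢
  linear_combination h2

theorem schwarzian_comp_of_leftInverse (hD : IsOpen D) (hf : AnalyticOnNhd ℂ f D)
    (hg : AnalyticOnNhd ℂ g (f '' D)) (hleft : ∀ z ∈ D, g (f z) = z) {z : ℂ} (hz : z ∈ D) :
    schwarzian g (f z) * deriv f z ^ 2 = -schwarzian f z := by
  have hf' : ∀ x ∈ D, deriv f x ≠ 0 := fun x hx => deriv_ne_zero_of_leftInverse hD hf hg hleft hx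
  have hg' := deriv_ne_zero_on_image_of_leftInverse hD hf hg hleft
  have h3 := deriv_comp_mul_deriv_eq_of_eqOn hD (f := f) (u := preSchwarzian g)
    (fun x hx => preSchwarzian_comp_of_leftInverse hD hf hg hleft hx) hz
    ((hg.preSchwarzian hg') _ (mem_image_of_mem f hz)).differentiableAt (hf z hz).differentiableAt
  rw [((hf.preSchwarzian hf' z hz).differentiableAt.hasDerivAt.fun_neg.fun_div
    (hf.deriv z hz).differentiableAt.hasDerivAt (hf' z hz)).deriv,
    show deriv (deriv f) z = preSchwarzian f z * deriv f z from
      (div_mul_cancel₀ _ (hf' z hz)).symm] at h3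
  rw [schwarzian_eq_deriv_preSchwarzian, schwarzian_eq_deriv_preSchwarzian,
    preSchwarzian_comp_of_leftInverse hD hf hg hleft hz]
  have hfz := hf' z hz
  field_simp at h3 ⊢
  linear_combination 2 * h3

theorem deriv_comp_mul_deriv_pow_sub {f q : ℂ → ℂ} {z : ℂ} (hq : DifferentiableAt ℂ q (f z))
    (hf : DifferentiableAt ℂ f z) (hf₂ : DifferentiableAt ℂ (deriv f) z) (hf' : deriv f z ≠ 0)
    (k : ℕ) :
    deriv (fun x => q (f x) * deriv f x ^ (k + 2)) z
        - ((k : ℂ) + 2) * preSchwarzian f z * (q (f z) * deriv f z ^ (k + 2))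
      = deriv q (f z) * deriv f z ^ (k + 3) := by
  have hqf : HasDerivAt (fun x => q (f x)) (deriv q (f z) * deriv f z) z :=
    hq.hasDerivAt.comp z hf.hasDerivAt
  rw [(hqf.fun_mul (hf₂.hasDerivAt.fun_pow (k + 2))).deriv, preSchwarzian]
  push_cast
  field_simp
  ring

theorem sigmaA_eq_of_leftInverse (hD : IsOpen D) (hf : AnalyticOnNhd ℂ f D)
    (hg : AnalyticOnNhd ℂ g (f '' D)) (hleft : ∀ z ∈ D, g (f z) = z) (k : ℕ) :
    ∀ z ∈ D, sigmaA f k z = -iteratedDeriv k (schwarzian g) (f z) * deriv f z ^ (k + 2) := by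
  have hf' : ∀ x ∈ D, deriv f x ≠ 0 := fun x hx => deriv_ne_zero_of_leftInverse hD hf hg hleft hx
  have hg' := deriv_ne_zero_on_image_of_leftInverse hD hf hg hleft
  induction k with
  | zero =>
    intro z hz
    rw [iteratedDeriv_zero, neg_mul, schwarzian_comp_of_leftInverse hD hf hg hleft hz, neg_neg]
    rfl
  | succ k ih =>
    intro z hz
    have hq : AnalyticOnNhd ℂ (-iteratedDeriv k (schwarzian g)) (f '' D) := by
      rw [iteratedDeriv_eq_iterate]
      exact ((hg.schwarzian hg').iterated_deriv k).neg
    have hσ : sigmaA f k =ᶠ[nhds z]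
        fun x => (-iteratedDeriv k (schwarzian g)) (f x) * deriv f x ^ (k + 2) :=
      eventuallyEq_of_mem (hD.mem_nhds hz) ih
    calc sigmaA f (k + 1) z
        = deriv (sigmaA f k) z - (k + 2) * preSchwarzian f z * sigmaA f k z := rfl
      _ = deriv (-iteratedDeriv k (schwarzian g)) (f z) * deriv f z ^ (k + 3) := by
        rw [hσ.deriv_eq, hσ.eq_of_nhds]
        exact deriv_comp_mul_deriv_pow_sub (hq _ (mem_image_of_mem f hz)).differentiableAt
          (hf z hz).differentiableAt (hf.deriv z hz).differentiableAt (hf' z hz) k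
      _ = _ := by rw [deriv.neg, iteratedDeriv_succ, neg_mul]

end LeftInverse

theorem sigmaA_eq_zero_iff_schwarzian_inv_polynomial_general (D : Set ℂ) (hD : IsOpen D)
    (hDconn : IsConnected D)
    (f g : ℂ → ℂ)
    (hf : DifferentiableOn ℂ f D)
    (hImg : IsOpen (f '' D)) (hg : DifferentiableOn ℂ g (f '' D))
    (hleft : ∀ z ∈ D, g (f z) = z)
    (n : ℕ) (hn : 4 ≤ n) :
    (∀ z ∈ D, sigmaA f (n - 3) z = 0) ↔
      ∃ P : Polynomial ℂ, P.degree ≤ (n - 4 : ℕ) ∧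
        ∀ w ∈ f '' D, schwarzian g w = P.eval w := by
  have hfA := hf.analyticOnNhd hD
  have hgA := hg.analyticOnNhd hImg
  obtain ⟨m, rfl⟩ : ∃ m, n = m + 4 := ⟨n - 4, by omega⟩
  rw [show m + 4 - 3 = m + 1 by omega, show m + 4 - 4 = m by omega,
    ← hImg.iteratedDeriv_eq_zero_iff_exists_polynomial
      (hDconn.image f hf.continuousOn).isPreconnected m
      (hgA.schwarzian (deriv_ne_zero_on_image_of_leftInverse hD hfA hgA hleft)),
    forall_mem_image]
  refine forall₂_congr fun z hz => ?_
  rw [sigmaA_eq_of_leftInverse hD hfA hgA hleft (m + 1) z hz, neg_mul, neg_eq_zero,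
    mul_eq_zero_iff_right (pow_ne_zero _ (deriv_ne_zero_of_leftInverse hD hfA hgA hleft hz))]

/-- For a biholomorphism `f` of a simply connected domain onto its image with
inverse `g` and `n ≥ 4`: `σ_n^A[f] ≡ 0` iff the Schwarzian of the inverse is a
polynomial of degree at most `n - 4`. -/
theorem sigmaA_eq_zero_iff_schwarzian_inv_polynomial (D : Set ℂ) (hD : IsOpen D)
    (hDconn : IsConnected D) (hDsc : SimplyConnectedSpace D)
    (f g : ℂ → ℂ)
    (hf : DifferentiableOn ℂ f D) (hf' : ∀ z ∈ D, deriv f z ≠ 0)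
    (hfInj : Set.InjOn f D)
    (hImg : IsOpen (f '' D)) (hg : DifferentiableOn ℂ g (f '' D))
    (hleft : ∀ z ∈ D, g (f z) = z)
    (n : ℕ) (hn : 4 ≤ n) :
    (∀ z ∈ D, sigmaA f (n - 3) z = 0) ↔
      ∃ P : Polynomial ℂ, P.degree ≤ (n - 4 : ℕ) ∧
        ∀ w ∈ f '' D, schwarzian g w = P.eval w :=
  sigmaA_eq_zero_iff_schwarzian_inv_polynomial_general D hD hDconn f g hf hImg hg hleft n hn
end

section
/- For any z₀ ∈ 𝔻 and ν ∈ L^∞(𝔻ᶜ), the linear map D(ν)(z) := ∫_{𝔻ᶜ} ν(η)/(z-η)^{n+1} d²η defines a holomorphic function on 𝔻 satisfying the bound |D(ν)(z)|·(1-|z|²)^{n-1} ≤ 2·4^{n-1}·π/(n-1) · ‖ν‖_∞ for all z ∈ 𝔻; hence ν ↦ D(ν) is a bounded linear operator from L^∞(𝔻ᶜ) to the space B_{n-1}(𝔻) of holomorphic functions with finite hyperbolic sup-norm. -/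
/-!
For `‖z‖ < 1` and `‖η‖ ≥ 1` we have `‖z - η‖ ≥ 1 - ‖z‖`, so after the translation `w = z - η` the
integral is dominated by `C` times the tail `∫_{‖w‖ ≥ 1 - ‖z‖} ‖w‖^{-(n+1)}`, which polar
coordinates evaluate to `2π / ((n - 1) (1 - ‖z‖)^{n-1})`. The weight absorbs this singularity
because `1 - ‖z‖² ≤ 2 (1 - ‖z‖)`. Holomorphy comes from differentiating under the integral sign:
for `z` near `z₀` we have `‖z - η‖ ≥ c ‖η‖` with `c > 0`, so the differentiated kernel is dominated
by a multiple of `‖η‖^{-(n+2)}`, which is integrable on `{‖η‖ ≥ 1}`.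
-/

open MeasureTheory Real Set Metric

theorem integral_inv_norm_pow_of_le_norm {δ : ℝ} (hδ : 0 < δ) {p : ℕ} (hp : 2 < p) :
    ∫ w in {w : ℂ | δ ≤ ‖w‖}, (‖w‖ ^ p)⁻¹ = 2 * π / (((p : ℝ) - 2) * δ ^ (p - 2)) := by
  have hS : MeasurableSet {w : ℂ | δ ≤ ‖w‖} := measurableSet_le measurable_const measurable_norm
  have hradial : ∫ y in Ioi (0 : ℝ), y * (Ici δ).indicator (fun r => (r ^ p)⁻¹) y
      = ∫ y in Ioi δ, y ^ (1 - (p : ℝ)) := by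
    rw [← integral_Ici_eq_integral_Ioi (x := δ), ← integral_indicator measurableSet_Ioi,
      ← integral_indicator measurableSet_Ici]
    congr 1 with y
    by_cases hy : δ ≤ y
    · have hy0 : 0 < y := hδ.trans_le hy
      simp [indicator, hy, hy0, rpow_sub hy0, div_eq_mul_inv]
    · simp [indicator, hy]
  have hp' : (2 : ℝ) < p := by exact_mod_cast hp
  calc ∫ w in {w : ℂ | δ ≤ ‖w‖}, (‖w‖ ^ p)⁻¹
      = ∫ w : ℂ, (Ici δ).indicator (fun r => (r ^ p)⁻¹) ‖w‖ := by
        rw [← integral_indicator hS]; rfl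
    _ = 2 * π * ∫ y in Ioi δ, y ^ (1 - (p : ℝ)) := by
        simp [integral_fun_norm_addHaar, Complex.finrank_real_complex, hradial, measureReal_def,
          Complex.volume_ball, mul_assoc]
    _ = 2 * π / (((p : ℝ) - 2) * δ ^ (p - 2)) := by
        have hexp : 1 - (p : ℝ) + 1 = -((p - 2 : ℕ) : ℝ) := by push_cast [hp.le]; ring
        rw [integral_Ioi_rpow_of_lt (by linarith) hδ, hexp, rpow_neg hδ.le, rpow_natCast,
          Nat.cast_sub hp.le]
        field_simp
        norm_num

theorem integrableOn_inv_norm_pow_of_le_norm {δ : ℝ} (hδ : 0 < δ) {p : ℕ} (hp : 2 < p) :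
    IntegrableOn (fun w : ℂ => (‖w‖ ^ p)⁻¹) {w : ℂ | δ ≤ ‖w‖} := by
  -- a nonzero Bochner integral forces integrability
  refine Integrable.of_integral_ne_zero ?_
  rw [integral_inv_norm_pow_of_le_norm hδ hp]
  have : 0 < (p : ℝ) - 2 := sub_pos.2 (by exact_mod_cast hp)
  positivity

theorem integral_inv_norm_sub_pow_of_le_norm_sub (z : ℂ) {δ : ℝ} {p : ℕ} (hδ : 0 < δ)
    (hp : 2 < p) :
    ∫ η in {η : ℂ | δ ≤ ‖z - η‖}, (‖z - η‖ ^ p)⁻¹ = 2 * π / (((p : ℝ) - 2) * δ ^ (p - 2)) := by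
  rw [← integral_inv_norm_pow_of_le_norm hδ hp]
  exact (Measure.measurePreserving_sub_left volume z).setIntegral_preimage_emb
    (Homeomorph.subLeft z).measurableEmbedding (fun w : ℂ => (‖w‖ ^ p)⁻¹) {w | δ ≤ ‖w‖}

theorem integrableOn_inv_norm_sub_pow_of_le_norm_sub (z : ℂ) {δ : ℝ} {p : ℕ} (hδ : 0 < δ)
    (hp : 2 < p) :
    IntegrableOn (fun η : ℂ => (‖z - η‖ ^ p)⁻¹) {η : ℂ | δ ≤ ‖z - η‖} :=
  ((Measure.measurePreserving_sub_left volume z).integrableOn_comp_preimage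
    (Homeomorph.subLeft z).measurableEmbedding).2 (integrableOn_inv_norm_pow_of_le_norm hδ hp)

theorem one_sub_mul_norm_le_norm_sub {E : Type*} [SeminormedAddCommGroup E] {z η : E} {r : ℝ}
    (hz : ‖z‖ ≤ r) (hη : 1 ≤ ‖η‖) : (1 - r) * ‖η‖ ≤ ‖z - η‖ := by
  have := norm_sub_norm_le η z
  rw [norm_sub_rev] at this
  nlinarith [norm_nonneg z]

theorem norm_div_sub_pow_le {c z η : ℂ} {r : ℝ} (hr : r < 1) (hz : ‖z‖ ≤ r) (hη : 1 ≤ ‖η‖)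
    (p : ℕ) : ‖c / (z - η) ^ p‖ ≤ ‖c‖ * ((1 - r) ^ p)⁻¹ * (‖η‖ ^ p)⁻¹ := by
  have hpos : 0 < (1 - r) * ‖η‖ := mul_pos (by linarith) (by linarith)
  rw [norm_div, norm_pow, mul_assoc, ← mul_inv, ← mul_pow, div_eq_mul_inv]
  gcongr
  exact one_sub_mul_norm_le_norm_sub hz hη

theorem hasDerivAt_div_sub_pow (c : ℂ) {z η : ℂ} (h : z ≠ η) (p : ℕ) :
    HasDerivAt (fun w => c / (w - η) ^ p) (-(p : ℂ) * (c / (z - η) ^ (p + 1))) z := by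
  have hsub : z - η ≠ 0 := sub_ne_zero.2 h
  have hpow : HasDerivAt (fun w => (w - η) ^ p) (p * (z - η) ^ (p - 1)) z := by
    simpa using ((hasDerivAt_id z).sub_const η).fun_pow p
  simp only [div_eq_mul_inv c]
  refine ((hpow.fun_inv (pow_ne_zero p hsub)).const_mul c).congr_deriv ?_
  obtain _ | p := p
  · simp
  · rw [Nat.add_sub_cancel]
    field_simp
    ring

noncomputable def bersKernelIntegral (p : ℕ) (ν : ℂ → ℂ) (z : ℂ) : ℂ :=
  ∫ η in {η : ℂ | 1 ≤ ‖η‖}, ν η / (z - η) ^ p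

section BersKernelIntegral

variable {p : ℕ} {ν : ℂ → ℂ} {C : ℝ}

theorem norm_div_sub_pow_le_of_norm_le (hC : ∀ η, ‖ν η‖ ≤ C) (z η : ℂ) :
    ‖ν η / (z - η) ^ p‖ ≤ C * (‖z - η‖ ^ p)⁻¹ := by
  rw [norm_div, norm_pow, div_eq_mul_inv]
  exact mul_le_mul_of_nonneg_right (hC η) (by positivity)

theorem one_le_norm_subset_one_sub_norm_le_norm_sub (z : ℂ) :
    {η : ℂ | 1 ≤ ‖η‖} ⊆ {η : ℂ | 1 - ‖z‖ ≤ ‖z - η‖} := fun η (hη : 1 ≤ ‖η‖) => by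
  have := norm_sub_norm_le η z
  rw [norm_sub_rev] at this
  show 1 - ‖z‖ ≤ ‖z - η‖
  linarith

theorem integrableOn_div_sub_pow (hν : Measurable ν) (hC : ∀ η, ‖ν η‖ ≤ C) (hp : 2 < p)
    {z : ℂ} (hz : ‖z‖ < 1) :
    IntegrableOn (fun η => ν η / (z - η) ^ p) {η : ℂ | 1 ≤ ‖η‖} := by
  have hmajorant := ((integrableOn_inv_norm_sub_pow_of_le_norm_sub z (sub_pos.2 hz) hp).mono_set
    (one_le_norm_subset_one_sub_norm_le_norm_sub z)).const_mul C
  refine hmajorant.mono' ?_ (ae_of_all _ fun η => norm_div_sub_pow_le_of_norm_le hC z η)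
  exact (hν.div ((measurable_const.sub measurable_id).pow_const p)).aestronglyMeasurable

theorem norm_bersKernelIntegral_le (hC : ∀ η, ‖ν η‖ ≤ C) (hp : 2 < p) {z : ℂ} (hz : ‖z‖ < 1) :
    ‖bersKernelIntegral p ν z‖ ≤ C * (2 * π / (((p : ℝ) - 2) * (1 - ‖z‖) ^ (p - 2))) := by
  have hδ : 0 < 1 - ‖z‖ := sub_pos.2 hz
  have hC0 : 0 ≤ C := (norm_nonneg _).trans (hC 0)
  have hmajorant := integrableOn_inv_norm_sub_pow_of_le_norm_sub z hδ hp
  calc ‖bersKernelIntegral p ν z‖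
      ≤ ∫ η in {η : ℂ | 1 ≤ ‖η‖}, C * (‖z - η‖ ^ p)⁻¹ :=
        norm_integral_le_of_norm_le ((hmajorant.mono_set
          (one_le_norm_subset_one_sub_norm_le_norm_sub z)).const_mul C)
          (ae_of_all _ fun η => norm_div_sub_pow_le_of_norm_le hC z η)
    _ ≤ ∫ η in {η : ℂ | 1 - ‖z‖ ≤ ‖z - η‖}, C * (‖z - η‖ ^ p)⁻¹ :=
        setIntegral_mono_set (hmajorant.const_mul C)
          (ae_of_all _ fun η => by simp only [Pi.zero_apply]; positivity)
          (one_le_norm_subset_one_sub_norm_le_norm_sub z).eventuallyLE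
    _ = C * (2 * π / (((p : ℝ) - 2) * (1 - ‖z‖) ^ (p - 2))) := by
        rw [integral_const_mul, integral_inv_norm_sub_pow_of_le_norm_sub z hδ hp]

theorem differentiableOn_bersKernelIntegral (hν : Measurable ν) (hC : ∀ η, ‖ν η‖ ≤ C)
    (hp : 2 < p) : DifferentiableOn ℂ (bersKernelIntegral p ν) (ball 0 1) := by
  intro z₀ hz₀
  rw [mem_ball_zero_iff] at hz₀
  have hS : MeasurableSet {η : ℂ | 1 ≤ ‖η‖} := measurableSet_le measurable_const measurable_norm
  set r := (1 + ‖z₀‖) / 2 with hr_def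
  have hr : r < 1 := by linarith
  have hball : ∀ z ∈ ball z₀ (1 - r), ‖z‖ ≤ r := fun z hz => by
    have := norm_le_norm_add_norm_sub' z z₀
    rw [mem_ball, dist_eq_norm] at hz
    linarith
  have hmeas (q : ℕ) (z : ℂ) : AEStronglyMeasurable (fun η => ν η / (z - η) ^ q)
      (volume.restrict {η : ℂ | 1 ≤ ‖η‖}) :=
    (hν.div ((measurable_const.sub measurable_id).pow_const q)).aestronglyMeasurable
  have hderiv := hasDerivAt_integral_of_dominated_loc_of_deriv_le
    (F' := fun z η => -(p : ℂ) * (ν η / (z - η) ^ (p + 1)))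
    (bound := fun η => p * (C * ((1 - r) ^ (p + 1))⁻¹ * (‖η‖ ^ (p + 1))⁻¹))
    (ball_mem_nhds z₀ (sub_pos.2 hr)) (.of_forall (hmeas p))
    (integrableOn_div_sub_pow hν hC hp hz₀)
    ((hmeas (p + 1) z₀).const_mul _) ?bound
    (((integrableOn_inv_norm_pow_of_le_norm one_pos (by omega)).const_mul _).const_mul _) ?diff
  · exact hderiv.2.differentiableAt.differentiableWithinAt
  case bound =>
    refine (ae_restrict_iff' hS).2 (ae_of_all _ fun η hη z hz => ?_)
    rw [norm_mul, norm_neg, Complex.norm_natCast]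
    gcongr
    exact (norm_div_sub_pow_le hr (hball z hz) hη (p + 1)).trans (by gcongr; exact hC η)
  case diff =>
    refine (ae_restrict_iff' hS).2 (ae_of_all _ fun η hη z hz => ?_)
    have hzη : ‖z‖ < ‖η‖ := ((hball z hz).trans_lt hr).trans_le hη
    exact hasDerivAt_div_sub_pow (ν η) (ne_of_apply_ne norm hzη.ne) p

end BersKernelIntegral

/-- For `n ≥ 2` and bounded measurable `ν` on `𝔻ᶜ`, the function
`D(ν)(z) = ∫_{𝔻ᶜ} ν(η)/(z-η)^{n+1} d²η` is holomorphic on the unit disc and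
satisfies `|D(ν)(z)|·(1-|z|²)^{n-1} ≤ 2·4^{n-1}·π/(n-1)·‖ν‖_∞`; in particular
`ν ↦ D(ν)` is a bounded linear operator into `B_{n-1}(𝔻)`. -/
theorem higher_bers_differential_bounded (n : ℕ) (hn : 2 ≤ n)
    (ν : ℂ → ℂ) (hmeas : Measurable ν) (C : ℝ)
    (hbound : ∀ η : ℂ, ‖ν η‖ ≤ C) :
    DifferentiableOn ℂ
        (fun z : ℂ => ∫ η in {η : ℂ | 1 ≤ ‖η‖},
          ν η / (z - η) ^ (n + 1)) {z : ℂ | ‖z‖ < 1} ∧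
      ∀ z : ℂ, ‖z‖ < 1 →
        ‖∫ η in {η : ℂ | 1 ≤ ‖η‖},
              ν η / (z - η) ^ (n + 1)‖ * (1 - (‖z‖) ^ 2) ^ (n - 1)
          ≤ 2 * 4 ^ (n - 1) * π / (n - 1) * C := by
  have hp : 2 < n + 1 := by omega
  refine ⟨(differentiableOn_bersKernelIntegral hmeas hbound hp).mono
    fun z hz => mem_ball_zero_iff.2 hz, fun z hz => ?_⟩
  have hn' : (0 : ℝ) < n - 1 := by
    have : (2 : ℝ) ≤ n := by exact_mod_cast hn
    linarith
  have hδ : 0 < 1 - ‖z‖ := sub_pos.2 hz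
  have hC0 : 0 ≤ C := (norm_nonneg _).trans (hbound 0)
  have hD := norm_bersKernelIntegral_le hbound hp hz
  rw [show n + 1 - 2 = n - 1 by omega, show ((n + 1 : ℕ) : ℝ) - 2 = n - 1 by push_cast; ring]
    at hD
  have hsq : 0 ≤ 1 - ‖z‖ ^ 2 := by nlinarith [norm_nonneg z]
  have hweight : (1 - ‖z‖ ^ 2) ^ (n - 1) ≤ 2 ^ (n - 1) * (1 - ‖z‖) ^ (n - 1) := by
    rw [← mul_pow]
    gcongr
    nlinarith [norm_nonneg z]
  calc _ ≤ C * (2 * π / (((n : ℝ) - 1) * (1 - ‖z‖) ^ (n - 1)))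
          * (2 ^ (n - 1) * (1 - ‖z‖) ^ (n - 1)) :=
        mul_le_mul hD hweight (by positivity) (by positivity)
    _ = 2 * 2 ^ (n - 1) * π / (n - 1) * C := by
        field_simp
    _ ≤ 2 * 4 ^ (n - 1) * π / (n - 1) * C := by
        gcongr
        norm_num
end

section
/- Let q ≥ 2 and let l be an integer with l > q. Then for every 1 ≤ p < ∞ and every z ∈ 𝔻, ∫_{|η|>1} |η - z|^{-lp} (|η|-1)^{pq-2} d²η < ∞. -/
open MeasureTheory

/-- Integrability of `ω_z^l(η) = (η-z)^{-l}` against the weight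
`λ_{𝔻ᶜ}^{2-pq}`: for integers `q ≥ 2`, `l > q` and real `1 ≤ p < ∞`,
`∫_{|η|>1} |η - z|^{-lp} (|η|-1)^{pq-2} d²η < ∞` for all `z ∈ 𝔻`. -/
theorem omega_weighted_integrable (q l : ℕ) (hq : 2 ≤ q) (hl : q < l)
    (p : ℝ) (hp : 1 ≤ p) (z : ℂ) (hz : ‖z‖ < 1) :
    ∫⁻ η in {η : ℂ | 1 < ‖η‖},
        ENNReal.ofReal (‖η - z‖ ^ (-((l : ℝ) * p))
          * (‖η‖ - 1) ^ (p * q - 2)) < ⊤ := by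
  have hp0 : (0:ℝ) < p := lt_of_lt_of_le one_pos hp
  have hql : (q:ℝ) + 1 ≤ (l:ℝ) := by exact_mod_cast hl
  have hq2 : (2:ℝ) ≤ (q:ℝ) := by exact_mod_cast hq
  set r : ℝ := (l:ℝ) * p - (p * q - 2) with hr_def
  have hr2 : (2:ℝ) < r := by nlinarith
  have hz1 : (0:ℝ) < 1 - ‖z‖ := by linarith
  set C : ℝ := (1 - ‖z‖) ^ (-((l:ℝ)*p)) * 2 ^ r with hC_def
  have hint : Integrable (fun η : ℂ => C * (1 + ‖η‖) ^ (-r)) := by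
    refine (integrable_one_add_norm ?_).const_mul C
    rw [Complex.finrank_real_complex]; exact_mod_cast hr2
  have key : ∀ η ∈ {η : ℂ | 1 < ‖η‖},
      ENNReal.ofReal (‖η - z‖ ^ (-((l : ℝ) * p))
          * (‖η‖ - 1) ^ (p * q - 2))
        ≤ ENNReal.ofReal (C * (1 + ‖η‖) ^ (-r)) := by
    intro η hη
    have hB : (1:ℝ) < ‖η‖ := hη
    have hB0 : (0:ℝ) < ‖η‖ := lt_trans one_pos hB
    refine ENNReal.ofReal_le_ofReal ?_
    have hexp : -((l:ℝ)*p) ≤ 0 := by nlinarith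
    have h1 : (1 - ‖z‖) * ‖η‖ ≤ ‖η - z‖ := by
      have h2 : ‖η‖ - ‖z‖ ≤ ‖η - z‖ := by
        simpa using norm_sub_norm_le η z
      nlinarith [mul_nonneg (norm_nonneg z) (sub_nonneg.mpr hB.le)]
    have hpos : (0:ℝ) < (1 - ‖z‖) * ‖η‖ := mul_pos hz1 hB0
    have step1 : ‖η - z‖ ^ (-((l:ℝ)*p))
        ≤ ((1 - ‖z‖) * ‖η‖) ^ (-((l:ℝ)*p)) :=
      Real.rpow_le_rpow_of_nonpos hpos h1 hexp
    have step1' : ((1 - ‖z‖) * ‖η‖) ^ (-((l:ℝ)*p))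
        = (1 - ‖z‖) ^ (-((l:ℝ)*p)) * ‖η‖ ^ (-((l:ℝ)*p)) :=
      Real.mul_rpow hz1.le hB0.le
    have hexp2 : (0:ℝ) ≤ p * q - 2 := by nlinarith
    have step2 : (‖η‖ - 1) ^ (p * q - 2) ≤ ‖η‖ ^ (p * q - 2) :=
      Real.rpow_le_rpow (by linarith) (by linarith) hexp2
    have step3 : ‖η‖ ^ (-((l:ℝ)*p)) * ‖η‖ ^ (p * q - 2)
        = ‖η‖ ^ (-r) := by
      rw [← Real.rpow_add hB0, hr_def]; ring_nf
    have hBhalf : (1 + ‖η‖) / 2 ≤ ‖η‖ := by linarith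
    have step4 : ‖η‖ ^ (-r) ≤ ((1 + ‖η‖) / 2) ^ (-r) :=
      Real.rpow_le_rpow_of_nonpos (by linarith) hBhalf (by linarith)
    have step5 : ((1 + ‖η‖) / 2) ^ (-r)
        = (1 + ‖η‖) ^ (-r) / 2 ^ (-r) :=
      Real.div_rpow (by positivity) (by norm_num) (-r)
    have h2r : (2:ℝ) ^ (-r) = ((2:ℝ) ^ r)⁻¹ := Real.rpow_neg (by norm_num) r
    have hnorm : ‖η‖ = ‖η‖ := rfl
    have hA0 : (0:ℝ) ≤ ‖η - z‖ ^ (-((l:ℝ)*p)) :=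
      Real.rpow_nonneg (norm_nonneg _) _
    have hD0 : (0:ℝ) ≤ (‖η‖ - 1) ^ (p * q - 2) :=
      Real.rpow_nonneg (by linarith) _
    have h2rpos : (0:ℝ) < (2:ℝ) ^ r := Real.rpow_pos_of_pos (by norm_num) r
    have hBexp0 : (0:ℝ) ≤ ‖η‖ ^ (p * q - 2) := Real.rpow_nonneg hB0.le _
    have hz0 : (0:ℝ) ≤ (1 - ‖z‖) ^ (-((l:ℝ)*p)) := Real.rpow_nonneg hz1.le _
    calc ‖η - z‖ ^ (-((l:ℝ)*p)) * (‖η‖ - 1) ^ (p * q - 2)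
        ≤ ((1 - ‖z‖) * ‖η‖) ^ (-((l:ℝ)*p))
            * ‖η‖ ^ (p * q - 2) := by
          exact mul_le_mul step1 step2 hD0 (Real.rpow_nonneg hpos.le _)
      _ = (1 - ‖z‖) ^ (-((l:ℝ)*p)) * ‖η‖ ^ (-r) := by
          rw [step1', mul_assoc, step3]
      _ ≤ (1 - ‖z‖) ^ (-((l:ℝ)*p)) * ((1 + ‖η‖) ^ (-r) / 2 ^ (-r)) := by
          rw [← step5]; exact mul_le_mul_of_nonneg_left step4 hz0
      _ = C * (1 + ‖η‖) ^ (-r) := by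
          rw [hnorm, hC_def, h2r]; field_simp
  calc ∫⁻ η in {η : ℂ | 1 < ‖η‖},
        ENNReal.ofReal (‖η - z‖ ^ (-((l : ℝ) * p))
          * (‖η‖ - 1) ^ (p * q - 2))
      ≤ ∫⁻ η in {η : ℂ | 1 < ‖η‖},
          ENNReal.ofReal (C * (1 + ‖η‖) ^ (-r)) := by
        refine setLIntegral_mono ?_ key
        have hc : Continuous fun η : ℂ => C * (1 + ‖η‖) ^ (-r) :=
          continuous_const.mul ((continuous_const.add continuous_norm).rpow_const
            (fun x => Or.inl (by positivity : (1:ℝ) + ‖(x:ℂ)‖ ≠ 0)))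
        exact hc.measurable.ennreal_ofReal
    _ ≤ ∫⁻ η, ENNReal.ofReal (C * (1 + ‖η‖) ^ (-r)) := setLIntegral_le_lintegral _ _
    _ < ⊤ := hint.lintegral_lt_top
end
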